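/- Let g be a Leibniz algebra over a field of characteristic different from two. Then g is quasi-Artinian if and only if there exists m ∈ ℕ such that for every descending chain of two-sided ideals I_1 ⊇ I_2 ⊇ ⋯ of g, both descending chains of ideals [g^(m), I_1] ⊇ [g^(m), I_2] ⊇ ⋯ and [I_1, g^(m)] ⊇ [I_2, g^(m)] ⊇ ⋯ terminate (are eventually constant). -/

import Mathlib

universe u v

/-- A (left) Leibniz algebra over a field `K`: a `K`-vector space with a bilinear
bracket satisfying the left Leibniz identity. -/
class LeibnizAlgebra (K : Type u) (g : Type v) [Field K] [AddCommGroup g] [Module K g]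
    extends Bracket g g where
  add_bracket : ∀ x y z : g, ⁅x + y, z⁆ = ⁅x, z⁆ + ⁅y, z⁆
  bracket_add : ∀ x y z : g, ⁅x, y + z⁆ = ⁅x, y⁆ + ⁅x, z⁆
  smul_bracket : ∀ (c : K) (x y : g), ⁅c • x, y⁆ = c • ⁅x, y⁆
  bracket_smul : ∀ (c : K) (x y : g), ⁅x, c • y⁆ = c • ⁅x, y⁆
  leibniz : ∀ x y z : g, ⁅x, ⁅y, z⁆⁆ = ⁅⁅x, y⁆, z⁆ + ⁅y, ⁅x, z⁆⁆

namespace Leibniz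

section Defs

variable (K : Type u) (g : Type v) [Field K] [AddCommGroup g] [Module K g] [LeibnizAlgebra K g]

lemma zero_bracket (y : g) : ⁅(0 : g), y⁆ = 0 := by
  have h := LeibnizAlgebra.smul_bracket (0 : K) (0 : g) y
  simpa using h

lemma bracket_zero (y : g) : ⁅y, (0 : g)⁆ = 0 := by
  have h := LeibnizAlgebra.bracket_smul (0 : K) y (0 : g)
  simpa using h

lemma neg_bracket (x y : g) : ⁅-x, y⁆ = -⁅x, y⁆ := by
  have h := LeibnizAlgebra.smul_bracket (-1 : K) x y
  simpa using h

lemma bracket_neg (x y : g) : ⁅x, -y⁆ = -⁅x, y⁆ := by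
  have h := LeibnizAlgebra.bracket_smul (-1 : K) x y
  simpa using h

lemma sub_bracket (x x' y : g) : ⁅x - x', y⁆ = ⁅x, y⁆ - ⁅x', y⁆ := by
  rw [sub_eq_add_neg, LeibnizAlgebra.add_bracket, neg_bracket K, ← sub_eq_add_neg]

lemma bracket_sub (x y y' : g) : ⁅x, y - y'⁆ = ⁅x, y⁆ - ⁅x, y'⁆ := by
  rw [sub_eq_add_neg, LeibnizAlgebra.bracket_add, bracket_neg K, ← sub_eq_add_neg]

/-- A (two-sided) ideal of a Leibniz algebra: a subspace `I` with `⁅g,I⁆ ⊆ I` and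
`⁅I,g⁆ ⊆ I`. -/
def IsIdeal (I : Submodule K g) : Prop :=
  ∀ x : g, ∀ a ∈ I, ⁅x, a⁆ ∈ I ∧ ⁅a, x⁆ ∈ I

/-- The bracket `[A, B]` of two subspaces: the span of all brackets `⁅a, b⁆`. -/
def bk (A B : Submodule K g) : Submodule K g :=
  Submodule.span K {z : g | ∃ a ∈ A, ∃ b ∈ B, z = ⁅a, b⁆}

/-- The derived series of a subspace `I`, computed in `g`:
`I^(0) = I`, `I^(n+1) = [I^(n), I^(n)]`. -/
def subDerived (I : Submodule K g) : ℕ → Submodule K g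
  | 0 => I
  | n + 1 => bk K g (subDerived I n) (subDerived I n)

/-- The derived series of `g`: `g^(0) = g`, `g^(n+1) = [g^(n), g^(n)]`. -/
def derived : ℕ → Submodule K g := subDerived K g ⊤

/-- A Leibniz algebra is solvable if `g^(n) = 0` for some `n`. -/
def IsSolvable : Prop := ∃ n : ℕ, derived K g n = ⊥

/-- A Leibniz algebra is abelian if its bracket is identically zero. -/
def IsAbelian : Prop := ∀ x y : g, ⁅x, y⁆ = 0

/-- A nonzero Leibniz algebra is simple if its only two-sided ideals are `⊥` and `⊤`. -/
def IsSimpleAlg : Prop :=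
  (∃ x : g, x ≠ 0) ∧ ∀ I : Submodule K g, IsIdeal K g I → I = ⊥ ∨ I = ⊤

/-- A Leibniz algebra `g` is quasi-Artinian if for every descending chain of ideals
`I_1 ⊇ I_2 ⊇ ⋯` there is `m` with `[g^(m), I_m] ⊆ I_n` and `[I_m, g^(m)] ⊆ I_n` for all `n`. -/
def QuasiArtinian : Prop :=
  ∀ I : ℕ → Submodule K g, (∀ n, IsIdeal K g (I n)) → (∀ n, I (n + 1) ≤ I n) →
    ∃ m : ℕ, ∀ n : ℕ,
      bk K g (derived K g m) (I m) ≤ I n ∧ bk K g (I m) (derived K g m) ≤ I n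

/-- A Leibniz algebra is Artinian if every descending chain of two-sided ideals stabilizes. -/
def ArtinianAlg : Prop :=
  ∀ I : ℕ → Submodule K g, (∀ n, IsIdeal K g (I n)) → (∀ n, I (n + 1) ≤ I n) →
    ∃ m : ℕ, ∀ n : ℕ, m ≤ n → I n = I m

/-- A solvable ideal: an ideal which is solvable (as a Leibniz algebra). -/
def IsSolvableIdeal (I : Submodule K g) : Prop :=
  IsIdeal K g I ∧ ∃ n : ℕ, subDerived K g I n = ⊥

/-- An abelian ideal: an ideal whose bracket vanishes identically. -/
def IsAbelianIdeal (I : Submodule K g) : Prop :=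
  IsIdeal K g I ∧ ∀ x ∈ I, ∀ y ∈ I, ⁅x, y⁆ = (0 : g)

/-- Minimal condition on solvable ideals: every descending chain of solvable
two-sided ideals stabilizes. -/
def MinOnSolvableIdeals : Prop :=
  ∀ I : ℕ → Submodule K g, (∀ n, IsSolvableIdeal K g (I n)) → (∀ n, I (n + 1) ≤ I n) →
    ∃ m : ℕ, ∀ n : ℕ, m ≤ n → I n = I m

/-- Minimal condition on abelian ideals: every descending chain of abelian
two-sided ideals stabilizes. -/
def MinOnAbelianIdeals : Prop :=
  ∀ I : ℕ → Submodule K g, (∀ n, IsAbelianIdeal K g (I n)) → (∀ n, I (n + 1) ≤ I n) →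
    ∃ m : ℕ, ∀ n : ℕ, m ≤ n → I n = I m

/-- `I` is a two-sided ideal of the subalgebra `A` (both viewed as subspaces of `g`). -/
def IsIdealIn (A I : Submodule K g) : Prop :=
  I ≤ A ∧ ∀ x ∈ A, ∀ a ∈ I, ⁅x, a⁆ ∈ I ∧ ⁅a, x⁆ ∈ I

/-- A prime ideal: a proper two-sided ideal `P` such that `[h₁, h₂] ⊆ P` for ideals
`h₁, h₂` forces `h₁ ⊆ P` or `h₂ ⊆ P`. -/
def IsPrimeIdeal (P : Submodule K g) : Prop :=
  IsIdeal K g P ∧ P ≠ ⊤ ∧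
    ∀ h₁ h₂ : Submodule K g, IsIdeal K g h₁ → IsIdeal K g h₂ →
      bk K g h₁ h₂ ≤ P → h₁ ≤ P ∨ h₂ ≤ P

/-- `Leib(g)`: the subspace spanned by all squares `⁅x, x⁆`. -/
def leibIdeal : Submodule K g :=
  Submodule.span K {z : g | ∃ x : g, z = ⁅x, x⁆}

/-- Given a subspace `C`, the preimage of the center of `g/C`:
all `x` with `⁅x, y⁆ ∈ C` and `⁅y, x⁆ ∈ C` for every `y`. -/
def centerStep (C : Submodule K g) : Submodule K g where
  carrier := {x : g | ∀ y : g, ⁅x, y⁆ ∈ C ∧ ⁅y, x⁆ ∈ C}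
  add_mem' := by
    intro a b ha hb
    intro y
    constructor
    · rw [LeibnizAlgebra.add_bracket]; exact C.add_mem (ha y).1 (hb y).1
    · rw [LeibnizAlgebra.bracket_add]; exact C.add_mem (ha y).2 (hb y).2
  zero_mem' := by
    intro y
    constructor
    · rw [zero_bracket K]; exact C.zero_mem
    · rw [bracket_zero K]; exact C.zero_mem
  smul_mem' := by
    intro c a ha y
    constructor
    · rw [LeibnizAlgebra.smul_bracket]; exact C.smul_mem c (ha y).1
    · rw [LeibnizAlgebra.bracket_smul]; exact C.smul_mem c (ha y).2

/-- The transfinite upper central series of `g`: `ζ_0 = 0`,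
`ζ_{α+1}/ζ_α = Z(g/ζ_α)`, and `ζ_ρ = ⋃_{α<ρ} ζ_α` at limit ordinals. -/
noncomputable def zeta : Ordinal.{0} → Submodule K g := fun o =>
  Ordinal.limitRecOn o ⊥ (fun _ C => centerStep K g C)
    (fun o _ ih => ⨆ (a : Ordinal.{0}) (h : a < o), ih a h)

/-- `g` is hypercentral if `ζ_α(g) = g` for some ordinal `α`. -/
def Hypercentral : Prop := ∃ o : Ordinal.{0}, zeta K g o = ⊤

end Defs

section Quotient

variable {K : Type u} {g : Type v} [Field K] [AddCommGroup g] [Module K g] [LeibnizAlgebra K g]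

/-- The bracket induced on the quotient `g ⧸ I` by a two-sided ideal `I`. -/
def quotBracket (I : Submodule K g) (hI : IsIdeal K g I) : g ⧸ I → g ⧸ I → g ⧸ I :=
  Quotient.map₂ (fun x y : g => ⁅x, y⁆) (by
    intro x x' hx y y' hy
    have hx' : x - x' ∈ I := (Submodule.quotientRel_def I).1 hx
    have hy' : y - y' ∈ I := (Submodule.quotientRel_def I).1 hy
    refine (Submodule.quotientRel_def I).2 ?_
    have key : ⁅x, y⁆ - ⁅x', y'⁆ = ⁅x - x', y⁆ + ⁅x', y - y'⁆ := by
      rw [sub_bracket K, bracket_sub K]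
      abel
    rw [key]
    exact I.add_mem (hI y (x - x') hx').2 (hI x' (y - y') hy').1)

@[simp] lemma quotBracket_mk (I : Submodule K g) (hI : IsIdeal K g I) (x y : g) :
    quotBracket I hI (Submodule.Quotient.mk x) (Submodule.Quotient.mk y) =
      Submodule.Quotient.mk ⁅x, y⁆ := rfl

/-- The quotient Leibniz algebra `g ⧸ I` of `g` by a two-sided ideal `I`. -/
def quotLeibniz (I : Submodule K g) (hI : IsIdeal K g I) : LeibnizAlgebra K (g ⧸ I) where
  bracket := quotBracket I hI
  add_bracket X Y Z := by
    obtain ⟨x, rfl⟩ := Submodule.Quotient.mk_surjective I X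
    obtain ⟨y, rfl⟩ := Submodule.Quotient.mk_surjective I Y
    obtain ⟨z, rfl⟩ := Submodule.Quotient.mk_surjective I Z
    show quotBracket I hI (Submodule.Quotient.mk x + Submodule.Quotient.mk y)
        (Submodule.Quotient.mk z) = _
    rw [← Submodule.Quotient.mk_add, quotBracket_mk]
    show _ = quotBracket I hI (Submodule.Quotient.mk x) (Submodule.Quotient.mk z) +
      quotBracket I hI (Submodule.Quotient.mk y) (Submodule.Quotient.mk z)
    rw [quotBracket_mk, quotBracket_mk, ← Submodule.Quotient.mk_add,
      LeibnizAlgebra.add_bracket]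
  bracket_add X Y Z := by
    obtain ⟨x, rfl⟩ := Submodule.Quotient.mk_surjective I X
    obtain ⟨y, rfl⟩ := Submodule.Quotient.mk_surjective I Y
    obtain ⟨z, rfl⟩ := Submodule.Quotient.mk_surjective I Z
    show quotBracket I hI (Submodule.Quotient.mk x)
        (Submodule.Quotient.mk y + Submodule.Quotient.mk z) = _
    rw [← Submodule.Quotient.mk_add, quotBracket_mk]
    show _ = quotBracket I hI (Submodule.Quotient.mk x) (Submodule.Quotient.mk y) +
      quotBracket I hI (Submodule.Quotient.mk x) (Submodule.Quotient.mk z)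
    rw [quotBracket_mk, quotBracket_mk, ← Submodule.Quotient.mk_add,
      LeibnizAlgebra.bracket_add]
  smul_bracket c X Y := by
    obtain ⟨x, rfl⟩ := Submodule.Quotient.mk_surjective I X
    obtain ⟨y, rfl⟩ := Submodule.Quotient.mk_surjective I Y
    show quotBracket I hI (c • Submodule.Quotient.mk x) (Submodule.Quotient.mk y) =
      c • quotBracket I hI (Submodule.Quotient.mk x) (Submodule.Quotient.mk y)
    rw [← Submodule.Quotient.mk_smul, quotBracket_mk, quotBracket_mk,
      ← Submodule.Quotient.mk_smul, LeibnizAlgebra.smul_bracket]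
  bracket_smul c X Y := by
    obtain ⟨x, rfl⟩ := Submodule.Quotient.mk_surjective I X
    obtain ⟨y, rfl⟩ := Submodule.Quotient.mk_surjective I Y
    show quotBracket I hI (Submodule.Quotient.mk x) (c • Submodule.Quotient.mk y) =
      c • quotBracket I hI (Submodule.Quotient.mk x) (Submodule.Quotient.mk y)
    rw [← Submodule.Quotient.mk_smul, quotBracket_mk, quotBracket_mk,
      ← Submodule.Quotient.mk_smul, LeibnizAlgebra.bracket_smul]
  leibniz X Y Z := by
    obtain ⟨x, rfl⟩ := Submodule.Quotient.mk_surjective I X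
    obtain ⟨y, rfl⟩ := Submodule.Quotient.mk_surjective I Y
    obtain ⟨z, rfl⟩ := Submodule.Quotient.mk_surjective I Z
    show quotBracket I hI (Submodule.Quotient.mk x)
        (quotBracket I hI (Submodule.Quotient.mk y) (Submodule.Quotient.mk z)) = _
    rw [quotBracket_mk, quotBracket_mk]
    show _ = quotBracket I hI
        (quotBracket I hI (Submodule.Quotient.mk x) (Submodule.Quotient.mk y))
        (Submodule.Quotient.mk z) +
      quotBracket I hI (Submodule.Quotient.mk y)
        (quotBracket I hI (Submodule.Quotient.mk x) (Submodule.Quotient.mk z))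
    rw [quotBracket_mk, quotBracket_mk, quotBracket_mk, quotBracket_mk,
      ← Submodule.Quotient.mk_add, LeibnizAlgebra.leibniz]

/-- A two-sided ideal of a Leibniz algebra, regarded as a Leibniz algebra itself. -/
def idealLeibniz (I : Submodule K g) (hI : IsIdeal K g I) : LeibnizAlgebra K I where
  bracket a b := ⟨⁅(a : g), (b : g)⁆, (hI (a : g) (b : g) b.2).1⟩
  add_bracket a b c := Subtype.ext (by
    show ⁅((a + b : I) : g), (c : g)⁆ = ⁅(a : g), (c : g)⁆ + ⁅(b : g), (c : g)⁆
    rw [Submodule.coe_add, LeibnizAlgebra.add_bracket])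
  bracket_add a b c := Subtype.ext (by
    show ⁅(a : g), ((b + c : I) : g)⁆ = ⁅(a : g), (b : g)⁆ + ⁅(a : g), (c : g)⁆
    rw [Submodule.coe_add, LeibnizAlgebra.bracket_add])
  smul_bracket c a b := Subtype.ext (by
    show ⁅((c • a : I) : g), (b : g)⁆ = c • ⁅(a : g), (b : g)⁆
    rw [Submodule.coe_smul, LeibnizAlgebra.smul_bracket])
  bracket_smul c a b := Subtype.ext (by
    show ⁅(a : g), ((c • b : I) : g)⁆ = c • ⁅(a : g), (b : g)⁆
    rw [Submodule.coe_smul, LeibnizAlgebra.bracket_smul])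
  leibniz a b c := Subtype.ext (by
    show ⁅(a : g), ⁅(b : g), (c : g)⁆⁆ =
      ⁅⁅(a : g), (b : g)⁆, (c : g)⁆ + ⁅(b : g), ⁅(a : g), (c : g)⁆⁆
    exact LeibnizAlgebra.leibniz (a : g) (b : g) (c : g))

end Quotient

section Constructions

variable {K : Type u} [Field K]

/-- The direct sum of two Leibniz algebras, with componentwise bracket. -/
instance prodLeibniz (g₁ : Type v) (g₂ : Type v) [AddCommGroup g₁] [Module K g₁]
    [LeibnizAlgebra K g₁] [AddCommGroup g₂] [Module K g₂] [LeibnizAlgebra K g₂] :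
    LeibnizAlgebra K (g₁ × g₂) where
  bracket x y := (⁅x.1, y.1⁆, ⁅x.2, y.2⁆)
  add_bracket x y z := Prod.ext_iff.2
    ⟨LeibnizAlgebra.add_bracket x.1 y.1 z.1, LeibnizAlgebra.add_bracket x.2 y.2 z.2⟩
  bracket_add x y z := Prod.ext_iff.2
    ⟨LeibnizAlgebra.bracket_add x.1 y.1 z.1, LeibnizAlgebra.bracket_add x.2 y.2 z.2⟩
  smul_bracket c x y := Prod.ext_iff.2
    ⟨LeibnizAlgebra.smul_bracket c x.1 y.1, LeibnizAlgebra.smul_bracket c x.2 y.2⟩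
  bracket_smul c x y := Prod.ext_iff.2
    ⟨LeibnizAlgebra.bracket_smul c x.1 y.1, LeibnizAlgebra.bracket_smul c x.2 y.2⟩
  leibniz x y z := Prod.ext_iff.2
    ⟨LeibnizAlgebra.leibniz x.1 y.1 z.1, LeibnizAlgebra.leibniz x.2 y.2 z.2⟩

/-- The direct sum of countably many copies of a Leibniz algebra `H`
(finitely supported sequences), with componentwise bracket. -/
noncomputable instance finsuppLeibniz (H : Type v) [AddCommGroup H] [Module K H]
    [LeibnizAlgebra K H] : LeibnizAlgebra K (ℕ →₀ H) where
  bracket f h := Finsupp.zipWith (fun a b : H => ⁅a, b⁆) (zero_bracket K H 0) f h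
  add_bracket f f' h := by
    ext i
    simp only [Finsupp.zipWith_apply, Finsupp.add_apply]
    exact LeibnizAlgebra.add_bracket (f i) (f' i) (h i)
  bracket_add f h h' := by
    ext i
    simp only [Finsupp.zipWith_apply, Finsupp.add_apply]
    exact LeibnizAlgebra.bracket_add (f i) (h i) (h' i)
  smul_bracket c f h := by
    ext i
    simp only [Finsupp.zipWith_apply, Finsupp.smul_apply]
    exact LeibnizAlgebra.smul_bracket c (f i) (h i)
  bracket_smul c f h := by
    ext i
    simp only [Finsupp.zipWith_apply, Finsupp.smul_apply]
    exact LeibnizAlgebra.bracket_smul c (f i) (h i)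
  leibniz f h k := by
    ext i
    simp only [Finsupp.zipWith_apply, Finsupp.add_apply]
    exact LeibnizAlgebra.leibniz (f i) (h i) (k i)

end Constructions

end Leibniz

open Leibniz

section Aux

variable {K : Type u} {g : Type v} [Field K] [AddCommGroup g] [Module K g] [LeibnizAlgebra K g]

lemma bracket_mem_bk {A B : Submodule K g} {a b : g} (ha : a ∈ A) (hb : b ∈ B) :
    ⁅a, b⁆ ∈ bk K g A B := Submodule.subset_span ⟨a, ha, b, hb, rfl⟩

lemma bk_le {A B C : Submodule K g} (h : ∀ a ∈ A, ∀ b ∈ B, ⁅a, b⁆ ∈ C) :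
    bk K g A B ≤ C := by
  apply Submodule.span_le.mpr
  rintro z ⟨a, ha, b, hb, rfl⟩
  exact h a ha b hb

lemma bk_mono {A A' B B' : Submodule K g} (h1 : A ≤ A') (h2 : B ≤ B') :
    bk K g A B ≤ bk K g A' B' :=
  bk_le fun _ ha _ hb => bracket_mem_bk (h1 ha) (h2 hb)

lemma antitone_chain {f : ℕ → Submodule K g} (h : ∀ n, f (n + 1) ≤ f n)
    {a b : ℕ} (hab : a ≤ b) : f b ≤ f a := by
  induction b, hab using Nat.le_induction with
  | base => exact le_rfl
  | succ n _ ih => exact le_trans (h n) ih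

lemma derived_succ_le (n : ℕ) : derived K g (n + 1) ≤ derived K g n := by
  induction n with
  | zero => exact le_top
  | succ n ih => exact bk_mono ih ih

/-- Left multiplication as a linear map. -/
def lmulL (x : g) : g →ₗ[K] g where
  toFun y := ⁅x, y⁆
  map_add' a b := LeibnizAlgebra.bracket_add x a b
  map_smul' c a := LeibnizAlgebra.bracket_smul c x a

@[simp] lemma lmulL_apply (x y : g) : lmulL (K := K) x y = ⁅x, y⁆ := rfl

/-- Right multiplication as a linear map. -/
def rmulL (x : g) : g →ₗ[K] g where
  toFun y := ⁅y, x⁆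
  map_add' a b := LeibnizAlgebra.add_bracket a b x
  map_smul' c a := LeibnizAlgebra.smul_bracket c a x

@[simp] lemma rmulL_apply (x y : g) : rmulL (K := K) x y = ⁅y, x⁆ := rfl

lemma mem_bk_left {A B : Submodule K g} (hA : IsIdeal K g A) (hB : IsIdeal K g B)
    (x : g) {t : g} (ht : t ∈ bk K g A B) : ⁅x, t⁆ ∈ bk K g A B := by
  have h : bk K g A B ≤ (bk K g A B).comap (lmulL (K := K) x) := by
    apply bk_le
    intro a ha b hb
    simp only [Submodule.mem_comap, lmulL_apply]
    rw [LeibnizAlgebra.leibniz]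
    exact add_mem (bracket_mem_bk (hA x a ha).1 hb) (bracket_mem_bk ha (hB x b hb).1)
  exact Submodule.mem_comap.mp (h ht)

lemma mem_bk_right_self {A : Submodule K g} (hA : IsIdeal K g A)
    (x : g) {t : g} (ht : t ∈ bk K g A A) : ⁅t, x⁆ ∈ bk K g A A := by
  have h : bk K g A A ≤ (bk K g A A).comap (rmulL (K := K) x) := by
    apply bk_le
    intro a ha b hb
    simp only [Submodule.mem_comap, rmulL_apply]
    have hiden : ⁅⁅a, b⁆, x⁆ = ⁅a, ⁅b, x⁆⁆ - ⁅b, ⁅a, x⁆⁆ := by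
      rw [LeibnizAlgebra.leibniz a b x]; abel
    rw [hiden]
    exact sub_mem (bracket_mem_bk ha (hA x b hb).2) (bracket_mem_bk hb (hA x a ha).2)
  exact Submodule.mem_comap.mp (h ht)

lemma isIdeal_derived (n : ℕ) : IsIdeal K g (derived K g n) := by
  induction n with
  | zero => exact fun x a _ => ⟨Submodule.mem_top, Submodule.mem_top⟩
  | succ n ih => exact fun x a ha => ⟨mem_bk_left ih ih x ha, mem_bk_right_self ih x ha⟩

lemma sq_mem_leib (x : g) : ⁅x, x⁆ ∈ leibIdeal K g := Submodule.subset_span ⟨x, rfl⟩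

lemma s_mem_leib (a b : g) : ⁅a, b⁆ + ⁅b, a⁆ ∈ leibIdeal K g := by
  have h : ⁅a, b⁆ + ⁅b, a⁆ = ⁅a + b, a + b⁆ - ⁅a, a⁆ - ⁅b, b⁆ := by
    rw [LeibnizAlgebra.add_bracket, LeibnizAlgebra.bracket_add, LeibnizAlgebra.bracket_add]
    abel
  rw [h]
  exact sub_mem (sub_mem (sq_mem_leib _) (sq_mem_leib _)) (sq_mem_leib _)

lemma leib_left (x : g) {t : g} (ht : t ∈ leibIdeal K g) : ⁅x, t⁆ ∈ leibIdeal K g := by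
  have h : leibIdeal K g ≤ (leibIdeal K g).comap (lmulL (K := K) x) := by
    apply Submodule.span_le.mpr
    rintro z ⟨y, rfl⟩
    simp only [SetLike.mem_coe, Submodule.mem_comap, lmulL_apply]
    rw [LeibnizAlgebra.leibniz]
    exact s_mem_leib ⁅x, y⁆ y
  exact Submodule.mem_comap.mp (h ht)

lemma leib_right (x : g) {t : g} (ht : t ∈ leibIdeal K g) : ⁅t, x⁆ = 0 := by
  have h : leibIdeal K g ≤ LinearMap.ker (rmulL (K := K) x) := by
    apply Submodule.span_le.mpr
    rintro z ⟨y, rfl⟩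
    simp only [SetLike.mem_coe, LinearMap.mem_ker, rmulL_apply]
    have hl := LeibnizAlgebra.leibniz (K := K) y y x
    exact (right_eq_add.mp hl)
  have := h ht
  simpa using this

end Aux

/-- Over a field of characteristic different from two, `g` is quasi-Artinian iff there is
`m ∈ ℕ` such that for every descending chain of ideals `I₁ ⊇ I₂ ⊇ ⋯`, the chains
`[g^(m), I₁] ⊇ [g^(m), I₂] ⊇ ⋯` and `[I₁, g^(m)] ⊇ [I₂, g^(m)] ⊇ ⋯` terminate. -/
theorem quasiArtinian_iff_exists_nat_chains_terminate (K : Type u) (g : Type v) [Field K] [AddCommGroup g] [Module K g]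
    [LeibnizAlgebra K g]
    (hchar : ringChar K ≠ 2) :
    QuasiArtinian K g ↔
      ∃ m : ℕ, ∀ I : ℕ → Submodule K g, (∀ n, IsIdeal K g (I n)) →
        (∀ n, I (n + 1) ≤ I n) →
        (∃ N : ℕ, ∀ n : ℕ, N ≤ n →
          bk K g (derived K g m) (I n) = bk K g (derived K g m) (I N)) ∧
        (∃ N : ℕ, ∀ n : ℕ, N ≤ n →
          bk K g (I n) (derived K g m) = bk K g (I N) (derived K g m)) := by
  constructor
  · -- Forward direction
    intro hQA
    obtain ⟨m₀, hm₀⟩ := hQA (derived K g) (fun n => isIdeal_derived n) (fun n => derived_succ_le n)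
    refine ⟨m₀ + 1, ?_⟩
    intro I hid hdesc
    set P := derived K g (m₀ + 1) with hPdef
    have hPle : ∀ n, P ≤ derived K g n := fun n => (hm₀ n).1
    have hPid : IsIdeal K g P := isIdeal_derived _
    have hPP : bk K g P P = P :=
      le_antisymm (derived_succ_le (m₀ + 1)) (hPle (m₀ + 2))
    obtain ⟨k, hk⟩ := hQA I hid hdesc
    have hCl : ∀ i, bk K g P (I k) ≤ I i :=
      fun i => le_trans (bk_mono (hPle k) le_rfl) (hk i).1
    have hCr : ∀ i, bk K g (I k) P ≤ I i :=
      fun i => le_trans (bk_mono le_rfl (hPle k)) (hk i).2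
    constructor
    · -- the left chain stabilizes at k
      refine ⟨k, fun n hn => le_antisymm (bk_mono le_rfl (antitone_chain hdesc hn)) ?_⟩
      apply bk_le
      intro p hp j hj
      have hmap : bk K g P P ≤ (bk K g P (I n)).comap (rmulL (K := K) j) := by
        apply bk_le
        intro q hq q' hq'
        simp only [Submodule.mem_comap, rmulL_apply]
        have hiden : ⁅⁅q, q'⁆, j⁆ = ⁅q, ⁅q', j⁆⁆ - ⁅q', ⁅q, j⁆⁆ := by
          rw [LeibnizAlgebra.leibniz q q' j]; abel
        rw [hiden]
        exact sub_mem
          (bracket_mem_bk hq (hCl n (bracket_mem_bk hq' hj)))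
          (bracket_mem_bk hq' (hCl n (bracket_mem_bk hq hj)))
      exact Submodule.mem_comap.mp (hmap (hPP.ge hp))
    · -- the right chain
      have hτid : ∀ n, IsIdeal K g (bk K g (I n) P ⊓ leibIdeal K g) := by
        intro n x a ha
        obtain ⟨haR, haT⟩ := ha
        refine ⟨⟨mem_bk_left (hid n) hPid x haR, leib_left x haT⟩, ?_⟩
        rw [leib_right x haT]
        exact Submodule.zero_mem _
      have hτdesc : ∀ n, (bk K g (I (n + 1)) P ⊓ leibIdeal K g) ≤
          (bk K g (I n) P ⊓ leibIdeal K g) :=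
        fun n => inf_le_inf (bk_mono (hdesc n) le_rfl) le_rfl
      obtain ⟨ν, hν⟩ := hQA (fun n => bk K g (I n) P ⊓ leibIdeal K g) hτid hτdesc
      have hPτ : ∀ n, bk K g P (bk K g (I ν) P ⊓ leibIdeal K g) ≤
          bk K g (I n) P ⊓ leibIdeal K g :=
        fun n => le_trans (bk_mono (hPle ν) le_rfl) (hν n).1
      set W := (⨅ i, I i) ⊓ P with hWdef
      have hWle : ∀ i, W ≤ I i := fun i => le_trans inf_le_left (iInf_le _ i)
      have hWid : IsIdeal K g W := by
        intro x a ha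
        obtain ⟨ha1, ha2⟩ := ha
        constructor
        · exact ⟨(Submodule.mem_iInf _).mpr fun i =>
            (hid i x a ((Submodule.mem_iInf _).mp ha1 i)).1, (hPid x a ha2).1⟩
        · exact ⟨(Submodule.mem_iInf _).mpr fun i =>
            (hid i x a ((Submodule.mem_iInf _).mp ha1 i)).2, (hPid x a ha2).2⟩
      set N := max k ν with hNdef
      have hINk : I N ≤ I k := antitone_chain hdesc (le_max_left _ _)
      have hmemW : ∀ {j q : g}, j ∈ I N → q ∈ P → ⁅j, q⁆ ∈ W := by
        intro j q hj hq
        exact ⟨(Submodule.mem_iInf _).mpr fun i => hCr i (bracket_mem_bk (hINk hj) hq),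
          (hPid j q hq).1⟩
      have hUleR : ∀ i, bk K g W P ≤ bk K g (I i) P := fun i => bk_mono (hWle i) le_rfl
      -- main decomposition lemma: [I_N, P] ≤ U ⊔ τ_N
      have hA : bk K g (I N) P ≤ bk K g W P ⊔ (bk K g (I N) P ⊓ leibIdeal K g) := by
        apply bk_le
        intro j hj p hp
        have hmap : bk K g P P ≤
            (bk K g W P ⊔ (bk K g (I N) P ⊓ leibIdeal K g)).comap (lmulL (K := K) j) := by
          apply bk_le
          intro q hq q' hq'
          simp only [Submodule.mem_comap, lmulL_apply]
          have hjq : ⁅j, q⁆ ∈ W := hmemW hj hq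
          have hjq' : ⁅j, q'⁆ ∈ W := hmemW hj hq'
          have hiden : ⁅j, ⁅q, q'⁆⁆ =
              (⁅⁅j, q⁆, q'⁆ - ⁅⁅j, q'⁆, q⁆) + (⁅q, ⁅j, q'⁆⁆ + ⁅⁅j, q'⁆, q⁆) := by
            rw [LeibnizAlgebra.leibniz j q q']; abel
          rw [hiden]
          refine add_mem (Submodule.mem_sup_left
            (sub_mem (bracket_mem_bk hjq hq') (bracket_mem_bk hjq' hq)))
            (Submodule.mem_sup_right ⟨?_, s_mem_leib q ⁅j, q'⁆⟩)
          exact add_mem (mem_bk_left (hid N) hPid q (bracket_mem_bk hj hq'))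
            (hUleR N (bracket_mem_bk hjq' hq))
        exact Submodule.mem_comap.mp (hmap (hPP.ge hp))
      -- refined lemma: [I_N, P] ≤ U ⊔ τ_n for every n
      have hA' : ∀ n, bk K g (I N) P ≤ bk K g W P ⊔ (bk K g (I n) P ⊓ leibIdeal K g) := by
        intro n
        apply bk_le
        intro j hj p hp
        have hτNν : bk K g (I N) P ⊓ leibIdeal K g ≤ bk K g (I ν) P ⊓ leibIdeal K g :=
          inf_le_inf (bk_mono (antitone_chain hdesc (le_max_right _ _)) le_rfl) le_rfl
        have hmap : bk K g P P ≤
            (bk K g W P ⊔ (bk K g (I n) P ⊓ leibIdeal K g)).comap (lmulL (K := K) j) := by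
          apply bk_le
          intro q hq q' hq'
          simp only [Submodule.mem_comap, lmulL_apply]
          have hjq : ⁅j, q⁆ ∈ W := hmemW hj hq
          have hv' : ⁅j, q'⁆ ∈ bk K g W P ⊔ (bk K g (I ν) P ⊓ leibIdeal K g) :=
            sup_le_sup le_rfl hτNν (hA (bracket_mem_bk hj hq'))
          obtain ⟨u, hu, t, ht, huv⟩ := Submodule.mem_sup.mp hv'
          have hiden : ⁅j, ⁅q, q'⁆⁆ = ⁅⁅j, q⁆, q'⁆ + ⁅q, ⁅j, q'⁆⁆ :=
            LeibnizAlgebra.leibniz j q q'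
          rw [hiden, ← huv, LeibnizAlgebra.bracket_add]
          refine add_mem (Submodule.mem_sup_left (bracket_mem_bk hjq hq')) (add_mem ?_ ?_)
          · exact Submodule.mem_sup_left (mem_bk_left hWid hPid q hu)
          · exact Submodule.mem_sup_right (hPτ n (bracket_mem_bk hq ht))
        exact Submodule.mem_comap.mp (hmap (hPP.ge hp))
      refine ⟨N, fun n hn => le_antisymm (bk_mono (antitone_chain hdesc hn) le_rfl) ?_⟩
      exact le_trans (hA' n) (sup_le (hUleR n) inf_le_left)
  · -- Backward direction
    rintro ⟨m, H⟩ I hid hdesc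
    obtain ⟨⟨N₁, h₁⟩, ⟨N₂, h₂⟩⟩ := H I hid hdesc
    refine ⟨max (max N₁ N₂) m, fun n => ⟨?_, ?_⟩⟩
    · have step1 : bk K g (derived K g (max (max N₁ N₂) m)) (I (max (max N₁ N₂) m)) ≤
          bk K g (derived K g m) (I N₁) :=
        bk_mono (antitone_chain (fun i => derived_succ_le i) (le_max_right _ _))
          (antitone_chain hdesc (le_trans (le_max_left _ _) (le_max_left _ _)))
      refine le_trans step1 ?_
      rcases le_total N₁ n with h | h
      · rw [← h₁ n h]
        exact bk_le fun x _ a ha => (hid n x a ha).1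
      · exact le_trans (bk_le fun x _ a ha => (hid N₁ x a ha).1) (antitone_chain hdesc h)
    · have step1 : bk K g (I (max (max N₁ N₂) m)) (derived K g (max (max N₁ N₂) m)) ≤
          bk K g (I N₂) (derived K g m) :=
        bk_mono (antitone_chain hdesc (le_trans (le_max_right _ _) (le_max_left _ _)))
          (antitone_chain (fun i => derived_succ_le i) (le_max_right _ _))
      refine le_trans step1 ?_
      rcases le_total N₂ n with h | h
      · rw [← h₂ n h]
        exact bk_le fun a ha x _ => (hid n x a ha).2
      · exact le_trans (bk_le fun a ha x _ => (hid N₂ x a ha).2) (antitone_chain hdesc h)
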